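/- arXiv:math/0407251 — 9 statements merged into one kernel-verified Lean document; each statement's English description precedes it below -/
import Mathlib

section
/- Let S be a non-empty set and let T be the state monad on the category of sets arising from the adjunction (S × –) ⊣ (–)^S, so that T X = (S × X)^S. Then the functor U : Set → Set, X ↦ X^S, is monadic: the comparison functor K : Set → Alg^T, Y ↦ (Y^S, ε_Y^S), is an equivalence of categories. -/
/-!
An algebra `a : (S × A)^S → A` of the state monad gives, for each `s : S`, the operation
`put s x = a (fun _ => (s, x))`. The algebra laws say that `put t ∘ put s = put s`, that
`put s (a φ) = put (φ s)`, and that `a φ` only depends on the values `put (φ s)`. Hence every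
algebra is `Y^S` for `Y` the common fixed points of the `put s`, via `k ↦ a (fun s => (s, k s))`.
For the algebras `Y^S` themselves, `put s u` is the constant function `u s`, so an algebra
morphism `F : Y^S → Z^S`, which commutes with `put`, is postcomposition with
`y ↦ F (const y) s₀` for any `s₀ : S`.
-/

open CategoryTheory CategoryTheory.MonoidalCategory

universe u

namespace StateMonad

variable {S : Type u}

section Algebra

variable (A : (ihom.adjunction S).toMonad.Algebra)

def put (s : S) (x : A.A) : A.A := A.a (↾fun _ => (s, x))

theorem a_unit_apply (x : A.A) : A.a (↾fun s => (s, x)) = x :=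
  congrArg (fun f : A.A ⟶ A.A => f x) A.unit

theorem a_assoc_apply (Φ : S ⟶ S ⊗ (S ⟶ S ⊗ A.A)) :
    A.a (↾fun s => ((Φ s).1, A.a (Φ s).2)) = A.a (↾fun s => (Φ s).2 (Φ s).1) :=
  (congrArg (fun f : _ ⟶ A.A => f Φ) A.assoc).symm

theorem put_a (s : S) (φ : S ⟶ S ⊗ A.A) : put A s (A.a φ) = put A (φ s).1 (φ s).2 :=
  a_assoc_apply A (↾fun _ => (s, φ))

theorem a_put (φ : S ⟶ S ⊗ A.A) : A.a (↾fun s => (s, put A (φ s).1 (φ s).2)) = A.a φ :=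
  a_assoc_apply A (↾fun s => (s, ↾fun _ => φ s))

theorem put_put (s t : S) (x : A.A) : put A t (put A s x) = put A s x :=
  put_a A t _

end Algebra

theorem Hom.map_put {A B : (ihom.adjunction S).toMonad.Algebra} (F : A ⟶ B) (s : S) (x : A.A) :
    F.f (put A s x) = put B s (F.f x) :=
  (congrArg (fun f : _ ⟶ B.A => f (↾fun _ => (s, x))) F.h).symm

instance [Nonempty S] : (ihom S : Type u ⥤ Type u).Faithful where
  map_injective {Y Z} _ _ h := ConcreteCategory.hom_ext _ _ fun y =>
    congrArg (fun φ : (S ⟶ Y) ⟶ (S ⟶ Z) => φ (↾fun _ => y) (Classical.arbitrary S)) h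

instance [Nonempty S] : (Monad.comparison (ihom.adjunction S)).Full where
  map_surjective {Y Z} F := by
    refine ⟨↾fun y => (show S ⟶ Z from F.f (↾fun _ => y)) (Classical.arbitrary S), ?_⟩
    refine Monad.Algebra.Hom.ext (ConcreteCategory.hom_ext _ _ fun u => ?_)
    refine ConcreteCategory.hom_ext _ _ fun s => ?_
    exact congrArg (fun v : S ⟶ Z => v (Classical.arbitrary S)) (Hom.map_put F s u)

section FixedPoints

variable (A : (ihom.adjunction S).toMonad.Algebra)

def FixedPoints : Type u := {x : A.A // ∀ s, put A s x = x}

def glue (k : S ⟶ FixedPoints A) : A.A := A.a (↾fun s => (s, (k s).1))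

theorem put_glue (k : S ⟶ FixedPoints A) (s : S) : put A s (glue A k) = (k s).1 :=
  (put_a A s _).trans ((k s).2 s)

def fixedPointsEquiv : (S ⟶ FixedPoints A) ≃ A.A where
  toFun := glue A
  invFun x := ↾fun s => ⟨put A s x, fun t => put_put A s t x⟩
  left_inv k := ConcreteCategory.hom_ext _ _ fun s => Subtype.ext (put_glue A k s)
  right_inv x := (a_put A (↾fun s => (s, x))).trans (a_unit_apply A x)

def comparisonObjFixedPointsIso :
    (Monad.comparison (ihom.adjunction S)).obj (FixedPoints A) ≅ A :=
  Monad.Algebra.isoMk (fixedPointsEquiv A).toIso <| ConcreteCategory.hom_ext _ _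
    fun (φ : S ⟶ S ⊗ (S ⟶ FixedPoints A)) => by
      refine (a_put A _).symm.trans (congrArg A.a (ConcreteCategory.hom_ext _ _ fun s => ?_))
      exact Prod.ext rfl (put_glue A (φ s).2 (φ s).1)

instance : (Monad.comparison (ihom.adjunction S)).EssSurj where
  mem_essImage A := ⟨FixedPoints A, ⟨comparisonObjFixedPointsIso A⟩⟩

end FixedPoints

end StateMonad

/-- Let `S` be a non-empty set and `T` the state monad on `Set` arising from the
adjunction `(S × –) ⊣ (–)^S`, so `T X = (S × X)^S`.  Then `U : X ↦ X^S` is monadic: the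
comparison functor `K : Set ⥤ Alg^T`, `Y ↦ (Y^S, ε_Y^S)`, is an equivalence of categories. -/
theorem stmt0 (S : Type u) (hS : Nonempty S) :
    (Monad.comparison (ihom.adjunction S)).IsEquivalence := by
  have := hS
  constructor <;> infer_instance
end

section
/- Let S be a set and (X, h) a T-algebra for the state monad T X = (S × X)^S on Set. Let Y = { h(λ s'. (s, x)) | s ∈ S, x ∈ X } ⊆ X, and let e_X^* : X → Y^S be the map x ↦ (λ s. h(λ s'. (s, x))). Then e_X^* is a bijection, with inverse y ↦ h(λ s. (s, y(s))). -/
/-- Let `S` be a set and `(X, h)` a `T`-algebra for the state monad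
`T X = (S × X)^S` on `Set`.  Let `Y = { h(λ s'. (s, x)) | s ∈ S, x ∈ X } ⊆ X` and let
`e_X^* : X → Y^S` be `x ↦ (λ s. h(λ s'. (s, x)))`.  Then `e_X^*` is a bijection, with inverse
`y ↦ h(λ s. (s, y(s)))`. -/
theorem stmt1 (S X : Type u) (h : (S → S × X) → X)
    (h_ident : ∀ x : X, h (fun s => (s, x)) = x)
    (h_assoc : ∀ (c : S → S) (c' : S → S → S) (x : S → S → X),
      h (fun s => (c s, h (fun s' => (c' s s', x s s')))) =
        h (fun s => (c' s (c s), x s (c s)))) :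
    letI Y : Set X := {y : X | ∃ (s : S) (x : X), y = h (fun _ => (s, x))}
    letI eStar : X → (S → Y) := fun x s => ⟨h (fun _ => (s, x)), s, x, rfl⟩
    letI f : (S → Y) → X := fun y => h (fun s => (s, (y s).1))
    Function.Bijective eStar ∧ Function.LeftInverse f eStar ∧
      Function.RightInverse f eStar := by
  set Y : Set X := {y : X | ∃ (s : S) (x : X), y = h (fun _ => (s, x))}
  -- elements of Y are fixed by h(λ_. (s₀, ·))
  have key : ∀ (s₀ : S) (y : Y), h (fun _ : S => (s₀, (y : X))) = (y : X) := by
    rintro s₀ ⟨_, s, x, rfl⟩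
    simpa using h_assoc (fun _ => s₀) (fun _ _ => s) (fun _ _ => x)
  have hleft : Function.LeftInverse (fun y : S → Y => h fun s => (s, (y s : X))) (fun x s => ⟨h fun _ => (s, x), s, x, rfl⟩) := by
    intro x
    show h (fun s => (s, h (fun _ => (s, x)))) = x
    have := h_assoc (fun s => s) (fun s _ => s) (fun _ _ => x)
    simpa [h_ident] using this
  have hright : Function.RightInverse (fun y : S → Y => h fun s => (s, (y s : X))) (fun x s => ⟨h fun _ => (s, x), s, x, rfl⟩) := by
    intro y
    funext s₀
    apply Subtype.ext
    show h (fun _ => (s₀, h (fun s => (s, (y s).1)))) = (y s₀).1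
    have := h_assoc (fun _ => s₀) (fun _ s' => s') (fun _ s' => (y s').1)
    rw [this]
    exact key s₀ (y s₀)
  exact ⟨⟨hleft.injective, hright.surjective⟩, hleft, hright⟩
end

section
/- Let S be a set and (X, h) a T-algebra for the state monad T X = (S × X)^S on Set. Let Y = { h(λ s'. (s, x)) | s ∈ S, x ∈ X } ⊆ X and e_X^* : X → Y^S the map x ↦ (λ s. h(λ s'. (s, x))). Then e_X^* is a morphism of T-algebras from (X, h) to (Y^S, ε_Y^S), i.e. e_X^* ∘ h = ε_Y^S ∘ T(e_X^*). -/
/-- Let `S` be a set and `(X, h)` a `T`-algebra for the state monad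
`T X = (S × X)^S` on `Set`.  Let `Y = { h(λ s'. (s, x)) | s ∈ S, x ∈ X } ⊆ X` and
`e_X^* : X → Y^S` the map `x ↦ (λ s. h(λ s'. (s, x)))`.  Then `e_X^*` is a morphism of
`T`-algebras from `(X, h)` to `(Y^S, ε_Y^S)`, i.e. `e_X^* ∘ h = ε_Y^S ∘ T(e_X^*)`:
for every `u ∈ T X`, `e_X^*(h(u)) = λ s. ε_Y((T e_X^*)(u)(s)) = λ s. e_X^*((u s).2)((u s).1)`. -/
theorem stmt2 (S X : Type u) (h : (S → S × X) → X)
    (h_ident : ∀ x : X, h (fun s => (s, x)) = x)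
    (h_assoc : ∀ (c : S → S) (c' : S → S → S) (x : S → S → X),
      h (fun s => (c s, h (fun s' => (c' s s', x s s')))) =
        h (fun s => (c' s (c s), x s (c s)))) :
    letI Y : Set X := {y : X | ∃ (s : S) (x : X), y = h (fun _ => (s, x))}
    letI eStar : X → (S → Y) := fun x s => ⟨h (fun _ => (s, x)), s, x, rfl⟩
    letI T : Type u → Type u := fun Z => S → S × Z
    letI Tmap : (X → (S → Y)) → T X → T (S → Y) := fun f u s => ((u s).1, f (u s).2)
    letI epsY : S × (S → Y) → Y := fun p => p.2 p.1
    letI epsYS : T (S → Y) → (S → Y) := fun v s => epsY (v s)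
    ∀ u : T X, eStar (h u) = epsYS (Tmap eStar u) := by
  intro u
  funext s
  apply Subtype.ext
  have := h_assoc (fun _ => s) (fun _ s' => (u s').1) (fun _ s' => (u s').2)
  simpa using this
end

section
/- Let C be a cartesian closed category with a fixed object S, and T the state monad T X = (S × X)^S arising from the adjunction (S × –) ⊣ (–)^S. Let (X, h) be a T-algebra, set f_X = h ∘ (q_{S×X})^* : S × X ⟶ X, and suppose f_X = m ∘ e with e : S × X ⟶ Y a regular epimorphism and m : Y ⟶ X a monomorphism. Then the transpose e^* : X ⟶ Y^S has a retraction; explicitly, (h ∘ θ_X) ∘ m^S is a retraction of e^*, where θ_X = ⟨p_{X^S}, ε_X⟩^* : X^S ⟶ T X. -/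
open CategoryTheory CategoryTheory.MonoidalCategory CategoryTheory.Limits
  CategoryTheory.CartesianMonoidalCategory

/-!
The transpose of `f_X = h ∘ (q_{S×X})^*` followed by `θ_X` is `T h ∘ ψ_X`, where
`ψ_X = ⟨p, (q_{S×X})^*⟩^* : X ⟶ T T X` satisfies `μ_X ∘ ψ_X = η_X`. Hence
`h ∘ θ_X ∘ m^S ∘ e^* = h ∘ θ_X ∘ (f_X)^* = h ∘ T h ∘ ψ_X = h ∘ μ_X ∘ ψ_X = h ∘ η_X = id`.
-/

namespace CategoryTheory.MonoidalClosed

variable {C : Type*} [Category C] [CartesianMonoidalCategory C] [MonoidalClosed C] (S : C)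

theorem curry_comp_curry_lift_fst_ev {X Z : C} (f : S ⊗ X ⟶ Z) :
    curry f ≫ curry (lift (fst S ((ihom S).obj Z)) ((ihom.ev S).app Z)) =
      curry (lift (fst S X) f) := by
  rw [← curry_natural_left]
  congr 1
  ext <;> simp [← uncurry_eq]

theorem curry_comp_comp_curry_lift_fst_ev {X W Z : C} (g : S ⊗ X ⟶ W) (h : W ⟶ Z) :
    curry (g ≫ h) ≫ curry (lift (fst S ((ihom S).obj Z)) ((ihom.ev S).app Z)) =
      curry (lift (fst S X) g) ≫ (ihom S).map (S ◁ h) := by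
  rw [curry_comp_curry_lift_fst_ev, ← lift_whiskerLeft, curry_natural_right]

theorem curry_lift_fst_curry_snd_comp_mu (X : C) :
    curry (lift (fst S X) (curry (snd S (S ⊗ X)))) ≫ ((ihom.adjunction S).toMonad).μ.app X =
      ((ihom.adjunction S).toMonad).η.app X := by
  change _ ≫ (ihom S).map ((ihom.ev S).app (S ⊗ X)) = (ihom.coev S).app X
  rw [← curry_natural_right, ← curry_id_eq_coev]
  congr 1
  calc lift (fst S X) (curry (snd S (S ⊗ X))) ≫ (ihom.ev S).app (S ⊗ X)
      = lift (fst S X) (𝟙 _) ≫ uncurry (curry (snd S (S ⊗ X))) := by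
        rw [uncurry_eq, lift_whiskerLeft_assoc, Category.id_comp]
    _ = 𝟙 _ := by rw [uncurry_curry, lift_snd]

end CategoryTheory.MonoidalClosed

theorem stmt3_general {C : Type u} [Category.{v} C] [CartesianMonoidalCategory C] [MonoidalClosed C]
    (S : C) (A : ((ihom.adjunction S).toMonad).Algebra)
    (Y : C) (e : S ⊗ A.A ⟶ Y) (m : Y ⟶ A.A)
    (hfac : MonoidalClosed.curry (snd S (S ⊗ A.A)) ≫ A.a = e ≫ m) :
    MonoidalClosed.curry e ≫
      ((ihom S).map m ≫
        MonoidalClosed.curry (lift (fst S ((ihom S).obj A.A)) ((ihom.ev S).app A.A)) ≫ A.a) =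
      𝟙 A.A := by
  open MonoidalClosed in
  have transpose_eq : curry e ≫ (ihom S).map m = curry (curry (snd S (S ⊗ A.A)) ≫ A.a) := by
    rw [← curry_natural_right, hfac]
  calc curry e ≫ (ihom S).map m ≫
        curry (lift (fst S ((ihom S).obj A.A)) ((ihom.ev S).app A.A)) ≫ A.a
      = (curry (curry (snd S (S ⊗ A.A)) ≫ A.a) ≫
          curry (lift (fst S ((ihom S).obj A.A)) ((ihom.ev S).app A.A))) ≫ A.a := by
        rw [← transpose_eq]; exact (Category.assoc _ _ _).symm.trans (Category.assoc _ _ _).symm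
    _ = curry (lift (fst S A.A) (curry (snd S (S ⊗ A.A)))) ≫
          ((ihom.adjunction S).toMonad).map A.a ≫ A.a :=
        (congrArg (· ≫ A.a) (curry_comp_comp_curry_lift_fst_ev S _ A.a)).trans
          (Category.assoc _ _ _)
    _ = curry (lift (fst S A.A) (curry (snd S (S ⊗ A.A)))) ≫
          ((ihom.adjunction S).toMonad).μ.app A.A ≫ A.a :=
        congrArg (_ ≫ ·) A.assoc.symm
    _ = 𝟙 A.A :=
        (Category.assoc _ _ _).symm.trans
          ((congrArg (· ≫ A.a) (curry_lift_fst_curry_snd_comp_mu S A.A)).trans A.unit)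

/-- In a cartesian closed category `C` with a fixed object `S`, for the state
monad `T X = (S × X)^S` and a `T`-algebra `(X, h)`, if `f_X = h ∘ (q_{S×X})^*` factors as a
regular epi `e` followed by a mono `m`, then `(h ∘ θ_X) ∘ m^S` is a retraction of `e^*`. -/
theorem stmt3 {C : Type u} [Category.{v} C] [CartesianMonoidalCategory C] [MonoidalClosed C]
    (S : C) (A : ((ihom.adjunction S).toMonad).Algebra)
    (Y : C) (e : S ⊗ A.A ⟶ Y) (m : Y ⟶ A.A)
    (hfac : MonoidalClosed.curry (snd S (S ⊗ A.A)) ≫ A.a = e ≫ m)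
    (he : Nonempty (RegularEpi e)) (hm : Mono m) :
    MonoidalClosed.curry e ≫
      ((ihom S).map m ≫
        MonoidalClosed.curry (lift (fst S ((ihom S).obj A.A)) ((ihom.ev S).app A.A)) ≫ A.a) =
      𝟙 A.A :=
  stmt3_general S A Y e m hfac
end

section
/- Let C be a cartesian closed category with a fixed object S, and T the state monad T X = (S × X)^S. Let (X, h) be a T-algebra, f_X = h ∘ (q_{S×X})^* : S × X ⟶ X, and suppose f_X = m ∘ e with e : S × X ⟶ Y an epimorphism and m : Y ⟶ X a monomorphism. If e has a section σ : Y ⟶ S × X (e ∘ σ = id_Y), then the transpose e^* : X ⟶ Y^S has a section; explicitly, Σ = h ∘ σ^S : Y^S ⟶ X satisfies e^* ∘ Σ = id_{Y^S}. -/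
open CategoryTheory CategoryTheory.MonoidalCategory CategoryTheory.Limits
  CategoryTheory.CartesianMonoidalCategory CategoryTheory.CartesianClosed

/-!
Let `c : S × TX ⟶ TX` send `(s, k)` to the constant state transformer with value `k s`, i.e.
`c = ((ε_{S×X}) ∘ q)^*`. The algebra law `h ∘ T h = h ∘ μ_X` says exactly that
`f_X ∘ (S × h) = h ∘ c`, and `c ∘ (S × σ^S) = (q_{S×X})^* ∘ σ ∘ ε_Y` by naturality of `ε`. Hence
`m ∘ e ∘ (S × Σ) = f_X ∘ (S × Σ) = f_X ∘ σ ∘ ε_Y = m ∘ e ∘ σ ∘ ε_Y = m ∘ ε_Y`; cancelling the mono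
`m` gives `e ∘ (S × Σ) = ε_Y`, the transpose of `e^* ∘ Σ = id`.
-/

namespace CategoryTheory.MonoidalClosed

variable {C : Type*} [Category C] [CartesianMonoidalCategory C] [MonoidalClosed C]

lemma curry_snd_comp {S W Z : C} (g : W ⟶ Z) :
    curry (snd S W ≫ g) = g ≫ curry (snd S Z) := by
  rw [← curry_natural_left, whiskerLeft_snd]

lemma whiskerLeft_map_comp_curry_snd_ev {S Y Z : C} (σ : Y ⟶ Z) :
    S ◁ (ihom S).map σ ≫ curry (snd S (S ⊗ (S ⟹ Z)) ≫ (ihom.ev S).app Z) =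
      (ihom.ev S).app Y ≫ σ ≫ curry (snd S Z) := by
  rw [← curry_natural_left, whiskerLeft_snd_assoc, ihom.ev_naturality, curry_snd_comp,
    Category.assoc]
  rfl

lemma whiskerLeft_comp_curry_snd_comp_of_assoc {S X : C} {h : S ⟹ (S ⊗ X) ⟶ X}
    (assoc : (ihom S).map ((ihom.ev S).app (S ⊗ X)) ≫ h = (ihom S).map (S ◁ h) ≫ h) :
    S ◁ h ≫ curry (snd S (S ⊗ X)) ≫ h =
      curry (snd S (S ⊗ (S ⟹ (S ⊗ X))) ≫ (ihom.ev S).app (S ⊗ X)) ≫ h := by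
  rw [← Category.assoc, ← curry_snd_comp, curry_natural_right, curry_natural_right,
    Category.assoc, Category.assoc, ← assoc]

lemma comp_curry_eq_id_of_section {S X Y : C} {h : S ⟹ (S ⊗ X) ⟶ X}
    (assoc : (ihom S).map ((ihom.ev S).app (S ⊗ X)) ≫ h = (ihom S).map (S ◁ h) ≫ h)
    {e : S ⊗ X ⟶ Y} {m : Y ⟶ X} [Mono m] (hfac : curry (snd S (S ⊗ X)) ≫ h = e ≫ m)
    {σ : Y ⟶ S ⊗ X} (hσ : σ ≫ e = 𝟙 Y) :
    ((ihom S).map σ ≫ h) ≫ curry e = 𝟙 (S ⟹ Y) := by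
  apply uncurry_injective
  rw [uncurry_natural_left, uncurry_curry, uncurry_id_eq_ev, ← cancel_mono m]
  calc (S ◁ ((ihom S).map σ ≫ h) ≫ e) ≫ m
      = S ◁ (ihom S).map σ ≫ S ◁ h ≫ curry (snd S (S ⊗ X)) ≫ h := by
        simp only [hfac, MonoidalCategory.whiskerLeft_comp, Category.assoc]
    _ = (ihom.ev S).app Y ≫ σ ≫ curry (snd S (S ⊗ X)) ≫ h := by
        rw [whiskerLeft_comp_curry_snd_comp_of_assoc assoc,
          reassoc_of% (whiskerLeft_map_comp_curry_snd_ev σ)]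
    _ = (ihom.ev S).app Y ≫ m := by
        rw [hfac, reassoc_of% hσ]

end CategoryTheory.MonoidalClosed

theorem stmt8_general {C : Type u} [Category.{v} C] [CartesianMonoidalCategory C] [MonoidalClosed C]
    (S : C) (A : ((ihom.adjunction S).toMonad).Algebra)
    (Y : C) (e : S ⊗ A.A ⟶ Y) (m : Y ⟶ A.A)
    (hfac : MonoidalClosed.curry (snd S (S ⊗ A.A)) ≫ A.a = e ≫ m)
    (hm : Mono m)
    (σ : Y ⟶ S ⊗ A.A) (hσ : σ ≫ e = 𝟙 Y) :
    ((ihom S).map σ ≫ A.a) ≫ MonoidalClosed.curry e = 𝟙 (S ⟹ Y) :=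
  MonoidalClosed.comp_curry_eq_id_of_section A.assoc hfac hσ

/-- In a cartesian closed category `C` with a fixed object `S`, for the state
monad `T X = (S × X)^S` and a `T`-algebra `(X, h)`, if `f_X = h ∘ (q_{S×X})^*` factors as an epi
`e` followed by a mono `m`, and `e` has a section `σ`, then `Σ = h ∘ σ^S` is a section of the
transpose `e^* : X ⟶ Y^S`. -/
theorem stmt8 {C : Type u} [Category.{v} C] [CartesianMonoidalCategory C] [MonoidalClosed C]
    (S : C) (A : ((ihom.adjunction S).toMonad).Algebra)
    (Y : C) (e : S ⊗ A.A ⟶ Y) (m : Y ⟶ A.A)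
    (hfac : MonoidalClosed.curry (snd S (S ⊗ A.A)) ≫ A.a = e ≫ m)
    (he : Epi e) (hm : Mono m)
    (σ : Y ⟶ S ⊗ A.A) (hσ : σ ≫ e = 𝟙 Y) :
    ((ihom S).map σ ≫ A.a) ≫ MonoidalClosed.curry e = 𝟙 (S ⟹ Y) :=
  stmt8_general S A Y e m hfac hm σ hσ
end

section
/- Let C be a cartesian closed category with terminal object 1 and a fixed object S admitting a global element s₀ : 1 ⟶ S, and let T be the state monad T X = (S × X)^S. Let (X, h) be a T-algebra, f_X = h ∘ (q_{S×X})^* : S × X ⟶ X, and suppose f_X = m ∘ e with e : S × X ⟶ Y an epimorphism and m : Y ⟶ X a monomorphism. Then e has a section; explicitly, σ = γ_{S×X} ∘ η_X ∘ m satisfies e ∘ σ = id_Y, where γ_Z : Z^S ⟶ Z is the composite of Z^{s₀} with the canonical isomorphism Z^1 ≅ Z. -/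
open CategoryTheory CategoryTheory.MonoidalCategory CategoryTheory.Limits
  CategoryTheory.CartesianMonoidalCategory CategoryTheory.CartesianClosed

variable {C : Type u} [Category.{v} C] [CartesianMonoidalCategory C] [MonoidalClosed C]

/-- Given a global element `s₀ : 1 ⟶ S`, the natural morphism `γ_Z : Z^S ⟶ Z`, composite of
`Z^{s₀}` with the canonical isomorphism `Z^1 ≅ Z`. -/
noncomputable def gamma {S : C} (s₀ : 𝟙_ C ⟶ S) (Z : C) : (S ⟹ Z) ⟶ Z :=
  (MonoidalClosed.pre s₀).app Z ≫ (MonoidalClosed.unitIsoSelf (X := Z)).hom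

/-!
The map `f = h ∘ (q_{S×X})^*` sends `(s, x)` to `h` applied to the constant computation
`s' ↦ (s, x)`, and the multiplication law of the algebra gives `f (s', f (s, x)) = f (s, x)`.
Since `γ ∘ η` is `x ↦ (s₀, x)`, this says `f ∘ (γ ∘ η) ∘ f = f`; writing `f = m ∘ e` and
cancelling the epi `e` on the right and the mono `m` on the left leaves `e ∘ (γ ∘ η ∘ m) = id`.
-/

open MonoidalClosed

section Monoidal

variable {D : Type*} [Category D]

lemma unitIsoSelf_hom [MonoidalCategory D] [MonoidalClosed D] (X : D) :
    (unitIsoSelf (X := X)).hom = (λ_ _).inv ≫ (ihom.ev (𝟙_ D)).app X :=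
  (Category.comp_id _).symm.trans
    (conjugateEquiv_counit (ihom.adjunction (𝟙_ D)) Adjunction.id (leftUnitorNatIso D).inv X)

noncomputable def insertPoint [MonoidalCategory D] {S : D} (s₀ : 𝟙_ D ⟶ S) (W : D) : W ⟶ S ⊗ W :=
  (λ_ W).inv ≫ s₀ ▷ W

lemma insertPoint_naturality [MonoidalCategory D] {S W V : D} (s₀ : 𝟙_ D ⟶ S) (g : W ⟶ V) :
    g ≫ insertPoint s₀ V = insertPoint s₀ W ≫ S ◁ g := by
  rw [insertPoint, leftUnitor_inv_naturality_assoc, whisker_exchange, insertPoint, Category.assoc]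

lemma coev_app_comp_insertPoint_comp_ev [MonoidalCategory D] [MonoidalClosed D] {S : D}
    (s₀ : 𝟙_ D ⟶ S) (X : D) :
    (ihom.coev S).app X ≫ insertPoint s₀ _ ≫ (ihom.ev S).app (S ⊗ X) = insertPoint s₀ X := by
  rw [reassoc_of% insertPoint_naturality, ihom.ev_coev]
  exact Category.comp_id _

lemma insertPoint_snd [CartesianMonoidalCategory D] {S : D} (s₀ : 𝟙_ D ⟶ S) (W : D) :
    insertPoint s₀ W ≫ snd S W = 𝟙 W := by
  rw [insertPoint, Category.assoc, whiskerRight_snd, ← leftUnitor_hom, Iso.inv_hom_id]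

end Monoidal

lemma gamma_eq_insertPoint_comp_ev {S : C} (s₀ : 𝟙_ C ⟶ S) (Z : C) :
    gamma s₀ Z = insertPoint s₀ (S ⟹ Z) ≫ (ihom.ev S).app Z := by
  rw [gamma, unitIsoSelf_hom, insertPoint, leftUnitor_inv_naturality_assoc,
    id_tensor_pre_app_comp_ev, Category.assoc]

lemma curry_snd_naturality {S W V : C} (g : W ⟶ V) :
    g ≫ curry (snd S V) = curry (snd S W) ≫ (ihom S).map g := by
  rw [← curry_natural_left, whiskerLeft_snd, curry_natural_right]

section StateMonad

variable {S : C}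

lemma whiskerLeft_curry_snd_comp_curry_snd_comp_map_ev (X : C) :
    S ◁ curry (snd S (S ⊗ X)) ≫ curry (snd S (S ⊗ (S ⟹ S ⊗ X))) ≫
        (ihom S).map ((ihom.ev S).app (S ⊗ X)) =
      snd S (S ⊗ X) ≫ curry (snd S (S ⊗ X)) := by
  rw [← curry_natural_right, ← curry_natural_left, ← curry_natural_left, whiskerLeft_snd_assoc,
    ← uncurry_eq, uncurry_curry, whiskerLeft_snd]

noncomputable def stateUpdate {X : C} (a : (S ⟹ S ⊗ X) ⟶ X) : S ⊗ X ⟶ X :=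
  curry (snd S (S ⊗ X)) ≫ a

-- `ha` below is the law `h ∘ T h = h ∘ μ` for `h = a`, with `T` and `μ` unfolded.
variable {X : C} {a : (S ⟹ S ⊗ X) ⟶ X}

lemma whiskerLeft_stateUpdate_comp_stateUpdate
    (ha : (ihom S).map (S ◁ a) ≫ a = (ihom S).map ((ihom.ev S).app (S ⊗ X)) ≫ a) :
    S ◁ stateUpdate a ≫ stateUpdate a = snd S (S ⊗ X) ≫ stateUpdate a :=
  calc S ◁ stateUpdate a ≫ stateUpdate a
      = S ◁ curry (snd S (S ⊗ X)) ≫ S ◁ a ≫ curry (snd S (S ⊗ X)) ≫ a := by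
        rw [stateUpdate, MonoidalCategory.whiskerLeft_comp_assoc]
    _ = S ◁ curry (snd S (S ⊗ X)) ≫ curry (snd S (S ⊗ (S ⟹ S ⊗ X))) ≫
          (ihom S).map (S ◁ a) ≫ a := by
        rw [reassoc_of% curry_snd_naturality]
    _ = snd S (S ⊗ X) ≫ stateUpdate a := by
        rw [ha, reassoc_of% whiskerLeft_curry_snd_comp_curry_snd_comp_map_ev, stateUpdate]

lemma stateUpdate_comp_insertPoint_comp_stateUpdate
    (ha : (ihom S).map (S ◁ a) ≫ a = (ihom S).map ((ihom.ev S).app (S ⊗ X)) ≫ a)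
    (s₀ : 𝟙_ C ⟶ S) :
    stateUpdate a ≫ insertPoint s₀ X ≫ stateUpdate a = stateUpdate a := by
  rw [reassoc_of% insertPoint_naturality, whiskerLeft_stateUpdate_comp_stateUpdate ha,
    reassoc_of% insertPoint_snd]

end StateMonad

lemma unit_app_comp_gamma {S : C} (s₀ : 𝟙_ C ⟶ S) (X : C) :
    (ihom.adjunction S).toMonad.η.app X ≫ gamma s₀ (S ⊗ X) = insertPoint s₀ X := by
  rw [gamma_eq_insertPoint_comp_ev]
  exact coev_app_comp_insertPoint_comp_ev s₀ X

/-- In a cartesian closed category `C` with terminal object `1` and an object `S`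
with a global element `s₀ : 1 ⟶ S`, for a `T`-algebra `(X, h)` of the state monad
`T X = (S × X)^S`, if `f_X = h ∘ (q_{S×X})^*` factors as an epi `e : S × X ⟶ Y` followed by a
mono `m : Y ⟶ X`, then `σ = γ_{S×X} ∘ η_X ∘ m` is a section of `e`. -/
theorem stmt9 (S : C) (s₀ : 𝟙_ C ⟶ S)
    (A : ((ihom.adjunction S).toMonad).Algebra)
    (Y : C) (e : S ⊗ A.A ⟶ Y) (m : Y ⟶ A.A)
    (hfac : MonoidalClosed.curry (snd S (S ⊗ A.A)) ≫ A.a = e ≫ m)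
    (he : Epi e) (hm : Mono m) :
    (m ≫ ((ihom.adjunction S).toMonad).η.app A.A ≫ gamma s₀ (S ⊗ A.A)) ≫ e = 𝟙 Y := by
  rw [unit_app_comp_gamma, ← cancel_mono m, ← cancel_epi e]
  simp only [Category.assoc, Category.id_comp]
  simpa only [stateUpdate, hfac, Category.assoc] using
    stateUpdate_comp_insertPoint_comp_stateUpdate A.assoc.symm s₀
end

section
/- Let C be a cartesian closed category with terminal object 1 and a fixed object S admitting a global element s₀ : 1 ⟶ S, and let T be the state monad T X = (S × X)^S. Let (X, h) be a T-algebra, f_X = h ∘ (q_{S×X})^* : S × X ⟶ X, and suppose f_X = m ∘ e with e : S × X ⟶ Y an epimorphism and m : Y ⟶ X a monomorphism. Then the transpose e^* : X ⟶ Y^S has a section. -/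
/-!
An algebra `h : (S × X)^S ⟶ X` of the state monad carries the operation
`f_X (s, x) = h (fun _ ↦ (s, x))`, "set the state to `s`, then run `x`". The associativity law
gives `f_X (s, h k) = f_X (k s)`: setting the state before a computation fixes the branch it takes.
In particular `f_X (s, f_X (t, x)) = f_X (t, x)`, so through the epi `e` the map `f_X` is the
identity on the image of `m`. The section of `e^*` sends `g : S ⟶ Y` to `h (fun s ↦ (s, m (g s)))`;
applying `f_X (s, -)` to it returns `m (g s)`, and cancelling the mono `m` gives `e (s, σ g) = g s`.
-/

open CategoryTheory CategoryTheory.MonoidalCategory CategoryTheory.Limits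
  CategoryTheory.CartesianMonoidalCategory CategoryTheory.CartesianClosed MonoidalClosed

namespace StateMonad

variable {C : Type u} [Category.{v} C] [CartesianMonoidalCategory C] [MonoidalClosed C] {S : C}

lemma curry_snd_comp {W Z : C} (g : W ⟶ Z) :
    curry (snd S W ≫ g) = g ≫ curry (snd S Z) := by
  rw [← whiskerLeft_snd, curry_natural_left]

variable {X : C} (a : (S ⟹ S ⊗ X) ⟶ X)

/-- The map `f_X = h ∘ (q_{S×X})^*` for `h = a`. -/
abbrev stateUpdate : S ⊗ X ⟶ X :=
  curry (snd S (S ⊗ X)) ≫ a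

variable {a}

lemma whiskerLeft_curry_comp_comp_stateUpdate
    (ha : (ihom S).map (S ◁ a) ≫ a = (ihom S).map ((ihom.ev S).app (S ⊗ X)) ≫ a)
    {W : C} (w : S ⊗ W ⟶ S ⊗ X) :
    S ◁ (curry w ≫ a) ≫ stateUpdate a = w ≫ stateUpdate a := by
  calc S ◁ (curry w ≫ a) ≫ stateUpdate a
      = S ◁ curry w ≫ curry (snd S _) ≫ (ihom S).map (S ◁ a) ≫ a := by
        rw [stateUpdate, whiskerLeft_comp_assoc, ← reassoc_of% curry_snd_comp,
          curry_natural_right, Category.assoc]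
    _ = curry (snd S _ ≫ S ◁ curry w) ≫ (ihom S).map ((ihom.ev S).app (S ⊗ X)) ≫ a := by
        rw [ha, reassoc_of% curry_snd_comp]
    _ = w ≫ stateUpdate a := by
        rw [← curry_natural_right_assoc, Category.assoc, whiskerLeft_curry_ihom_ev_app,
          curry_snd_comp, Category.assoc]
        rfl

lemma whiskerLeft_stateUpdate_comp_stateUpdate
    (ha : (ihom S).map (S ◁ a) ≫ a = (ihom S).map ((ihom.ev S).app (S ⊗ X)) ≫ a) :
    S ◁ stateUpdate a ≫ stateUpdate a = snd S _ ≫ stateUpdate a :=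
  whiskerLeft_curry_comp_comp_stateUpdate ha (snd S _)

lemma whiskerLeft_comp_stateUpdate_of_eq_comp
    (ha : (ihom S).map (S ◁ a) ≫ a = (ihom S).map ((ihom.ev S).app (S ⊗ X)) ≫ a)
    {Y : C} (e : S ⊗ X ⟶ Y) [Epi e] (m : Y ⟶ X) (hfac : stateUpdate a = e ≫ m) :
    S ◁ m ≫ stateUpdate a = snd S Y ≫ m := by
  have : Epi (S ◁ e) := inferInstanceAs (Epi ((tensorLeft S).map e))
  rw [← cancel_epi (S ◁ e), ← whiskerLeft_comp_assoc, ← hfac,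
    whiskerLeft_stateUpdate_comp_stateUpdate ha, whiskerLeft_snd_assoc, hfac]

end StateMonad

open StateMonad in
theorem stmt11_general {C : Type u} [Category.{v} C] [CartesianMonoidalCategory C] [MonoidalClosed C]
    (S : C)
    (A : ((ihom.adjunction S).toMonad).Algebra)
    (Y : C) (e : S ⊗ A.A ⟶ Y) (m : Y ⟶ A.A)
    (hfac : MonoidalClosed.curry (snd S (S ⊗ A.A)) ≫ A.a = e ≫ m)
    (he : Epi e) (hm : Mono m) :
    ∃ σ : (S ⟹ Y) ⟶ A.A, σ ≫ MonoidalClosed.curry e = 𝟙 (S ⟹ Y) := by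
  refine ⟨curry (lift (fst S (S ⟹ Y)) ((ihom.ev S).app Y) ≫ S ◁ m) ≫ A.a, ?_⟩
  have hassoc : (ihom S).map (S ◁ A.a) ≫ A.a = (ihom S).map ((ihom.ev S).app _) ≫ A.a :=
    A.assoc.symm
  have hm_fixed := whiskerLeft_comp_stateUpdate_of_eq_comp hassoc e m hfac
  apply uncurry_injective
  rw [uncurry_natural_left, uncurry_curry, uncurry_id_eq_ev, ← cancel_mono m, Category.assoc,
    ← hfac, whiskerLeft_curry_comp_comp_stateUpdate hassoc, Category.assoc, hm_fixed,
    ← Category.assoc, lift_snd]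

/-- In a cartesian closed category `C` with terminal object `1` and an object
`S` with a global element `s₀ : 1 ⟶ S`, for a `T`-algebra `(X, h)` of the state monad
`T X = (S × X)^S`, if `f_X = h ∘ (q_{S×X})^*` factors as an epi `e : S × X ⟶ Y` followed by a
mono `m : Y ⟶ X`, then the transpose `e^* : X ⟶ Y^S` has a section. -/
theorem stmt11 {C : Type u} [Category.{v} C] [CartesianMonoidalCategory C] [MonoidalClosed C]
    (S : C) (s₀ : 𝟙_ C ⟶ S)
    (A : ((ihom.adjunction S).toMonad).Algebra)
    (Y : C) (e : S ⊗ A.A ⟶ Y) (m : Y ⟶ A.A)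
    (hfac : MonoidalClosed.curry (snd S (S ⊗ A.A)) ≫ A.a = e ≫ m)
    (he : Epi e) (hm : Mono m) :
    ∃ σ : (S ⟹ Y) ⟶ A.A, σ ≫ MonoidalClosed.curry e = 𝟙 (S ⟹ Y) :=
  stmt11_general S A Y e m hfac he hm
end

section
/- Let C be a cartesian closed category with a fixed object S, and T the state monad T X = (S × X)^S. Let (X, h) be a T-algebra, f_X = h ∘ (q_{S×X})^* : S × X ⟶ X, and suppose f_X = m ∘ e with e : S × X ⟶ Y an epimorphism and m : Y ⟶ X a monomorphism. Then the transpose e^* : X ⟶ Y^S is a morphism of T-algebras from (X, h) to (Y^S, ε_Y^S), i.e. e^* ∘ h = ε_Y^S ∘ T(e^*). -/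
open CategoryTheory CategoryTheory.MonoidalCategory CategoryTheory.Limits
  CategoryTheory.CartesianMonoidalCategory

/-!
For `f = h ∘ (q_{S×X})^*` (`stateAction`), the algebra law `h ∘ T h = h ∘ μ`, together with
naturality of the constant maps `(q_W)^* : W ⟶ W^S`, gives `f ∘ (S × h) = f ∘ ε_{S×X}`; since `m` is mono this
already holds for `e`. Transposing, `e^* ∘ h` is the transpose of `e ∘ ε_{S×X}`, which is `e^S`,
and `e^S = ε_Y^S ∘ (S × e^*)^S = ε_Y^S ∘ T(e^*)`.
-/

open MonoidalClosed

namespace StateMonad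

variable {C : Type*} [Category C] [CartesianMonoidalCategory C] [MonoidalClosed C] (S : C)

lemma comp_curry_snd {Z W : C} (g : Z ⟶ W) :
    g ≫ curry (snd S W) = curry (snd S Z) ≫ (ihom S).map g := by
  rw [← curry_natural_left, ← curry_natural_right, whiskerLeft_snd]

lemma curry_ev_comp {X Y : C} (g : X ⟶ Y) :
    curry ((ihom.ev S).app X ≫ g) = (ihom S).map g :=
  (curry_eq_iff _ _).2 (uncurry_ihom_map S g).symm

lemma map_curry_comp_map_ev {X Y : C} (e : S ⊗ X ⟶ Y) :
    ((ihom.adjunction S).toMonad : C ⥤ C).map (curry e) ≫ (ihom S).map ((ihom.ev S).app Y) =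
      (ihom S).map e := by
  change (ihom S).map (S ◁ curry e) ≫ _ = _
  rw [← Functor.map_comp, whiskerLeft_curry_ihom_ev_app]

variable (A : ((ihom.adjunction S).toMonad).Algebra)

def stateAction : S ⊗ A.A ⟶ A.A := curry (snd S (S ⊗ A.A)) ≫ A.a

lemma whiskerLeft_a_comp_stateAction :
    S ◁ A.a ≫ stateAction S A = (ihom.ev S).app (S ⊗ A.A) ≫ stateAction S A := by
  unfold stateAction
  erw [reassoc_of% comp_curry_snd, reassoc_of% comp_curry_snd]
  exact congrArg (curry (snd S _) ≫ ·) A.assoc.symm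

lemma whiskerLeft_a_comp_eq_ev_comp {Y : C} (e : S ⊗ A.A ⟶ Y) (m : Y ⟶ A.A) [Mono m]
    (hfac : stateAction S A = e ≫ m) : S ◁ A.a ≫ e = (ihom.ev S).app (S ⊗ A.A) ≫ e :=
  (cancel_mono m).1 <| by
    erw [Category.assoc, Category.assoc, ← hfac]
    exact whiskerLeft_a_comp_stateAction S A

end StateMonad

open StateMonad in
theorem stmt12_general {C : Type u} [Category.{v} C] [CartesianMonoidalCategory C] [MonoidalClosed C]
    (S : C) (A : ((ihom.adjunction S).toMonad).Algebra)
    (Y : C) (e : S ⊗ A.A ⟶ Y) (m : Y ⟶ A.A)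
    (hfac : MonoidalClosed.curry (snd S (S ⊗ A.A)) ≫ A.a = e ≫ m)
    (hm : Mono m) :
    A.a ≫ MonoidalClosed.curry e =
      ((ihom.adjunction S).toMonad : C ⥤ C).map (MonoidalClosed.curry e) ≫
        (ihom S).map ((ihom.ev S).app Y) := by
  rw [← curry_natural_left, whiskerLeft_a_comp_eq_ev_comp S A e m hfac]
  exact (curry_ev_comp S e).trans (map_curry_comp_map_ev S e).symm

/-- In a cartesian closed category `C` with a fixed object `S`, for the state
monad `T X = (S × X)^S` and a `T`-algebra `(X, h)`, if `f_X = h ∘ (q_{S×X})^*` factors as an epi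
`e : S × X ⟶ Y` followed by a mono `m : Y ⟶ X`, then the transpose `e^* : X ⟶ Y^S` is a
morphism of `T`-algebras `(X, h) ⟶ (Y^S, ε_Y^S)`, i.e. `e^* ∘ h = ε_Y^S ∘ T(e^*)`. -/
theorem stmt12 {C : Type u} [Category.{v} C] [CartesianMonoidalCategory C] [MonoidalClosed C]
    (S : C) (A : ((ihom.adjunction S).toMonad).Algebra)
    (Y : C) (e : S ⊗ A.A ⟶ Y) (m : Y ⟶ A.A)
    (hfac : MonoidalClosed.curry (snd S (S ⊗ A.A)) ≫ A.a = e ≫ m)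
    (he : Epi e) (hm : Mono m) :
    A.a ≫ MonoidalClosed.curry e =
      ((ihom.adjunction S).toMonad : C ⥤ C).map (MonoidalClosed.curry e) ≫
        (ihom S).map ((ihom.ev S).app Y) :=
  stmt12_general S A Y e m hfac hm
end

section
/- Let C be a cartesian closed category with terminal object 1 and a fixed object S admitting a global element s₀ : 1 ⟶ S, and T the state monad T X = (S × X)^S. Fix an object Y and consider the T-algebra K Y = (Y^S, ε_Y^S). Its structure map satisfies ε_Y^S ∘ (q_{S×Y^S})^* = (q_Y)^* ∘ ε_Y, and for any factorization ε_Y^S ∘ (q_{S×Y^S})^* = m ∘ e with e : S × Y^S ⟶ Y' a regular epimorphism and m : Y' ⟶ Y^S a monomorphism, there is a unique isomorphism ξ : Y ≅ Y' such that ξ ∘ ε_Y = e and m ∘ ξ = (q_Y)^*. -/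
open CategoryTheory CategoryTheory.MonoidalCategory CategoryTheory.Limits
  CategoryTheory.CartesianMonoidalCategory CategoryTheory.CartesianClosed

/-!
A global element `s₀ : 1 ⟶ S` makes the evaluation `ε_Y : S × Y^S ⟶ Y` a split epimorphism
(with section `y ↦ (s₀, const y)`) and the constant-map embedding `(q_Y)^* : Y ⟶ Y^S` a split
monomorphism (with retraction "evaluate at `s₀`"). Naturality of `(q_–)^*` identifies the composite
`ε_Y^S ∘ (q_{S×Y^S})^*` with `(q_Y)^* ∘ ε_Y`, which is therefore a (strong epi, mono)
factorization; any two such factorizations of one morphism are related by a unique isomorphism.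
-/

namespace CategoryTheory

theorem existsUnique_iso_of_strongEpi_mono_fac {C : Type*} [Category C] {X Z I I' : C}
    {e : X ⟶ I} {m : I ⟶ Z} {e' : X ⟶ I'} {m' : I' ⟶ Z}
    [StrongEpi e] [Mono m] [StrongEpi e'] [Mono m'] (h : e ≫ m = e' ≫ m') :
    ∃! ξ : I ≅ I', e ≫ ξ.hom = e' ∧ ξ.hom ≫ m' = m := by
  let F : StrongEpiMonoFactorisation (e ≫ m) := { I := I, m := m, e := e }
  let F' : StrongEpiMonoFactorisation (e ≫ m) := { I := I', m := m', e := e', fac := h.symm }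
  have hF := F.toMonoIsImage
  have hF' := F'.toMonoIsImage
  refine ⟨hF.isoExt hF', ⟨hF.e_isoExt_hom hF', hF.isoExt_hom_m hF'⟩, ?_⟩
  rintro ξ ⟨hξ, -⟩
  ext
  rw [← cancel_epi e, hξ]
  exact (hF.e_isoExt_hom hF').symm

namespace MonoidalClosed

variable {C : Type*} [Category C] [CartesianMonoidalCategory C] [MonoidalClosed C] (S : C)

theorem curry_snd_comp_map {X Y : C} (f : X ⟶ Y) :
    curry (snd S X) ≫ (ihom S).map f = f ≫ curry (snd S Y) := by
  rw [← curry_natural_right, ← curry_natural_left, whiskerLeft_snd]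

theorem whiskerLeft_curry_snd_comp_ev (Y : C) :
    S ◁ curry (snd S Y) ≫ (ihom.ev S).app Y = snd S Y := by
  rw [← uncurry_eq, uncurry_curry]

variable {S}

theorem lift_curry_snd_comp_ev (s₀ : 𝟙_ C ⟶ S) (Y : C) :
    lift (toUnit Y ≫ s₀) (curry (snd S Y)) ≫ (ihom.ev S).app Y = 𝟙 Y := by
  calc lift (toUnit Y ≫ s₀) (curry (snd S Y)) ≫ (ihom.ev S).app Y
      = lift (toUnit Y ≫ s₀) (𝟙 Y) ≫ S ◁ curry (snd S Y) ≫ (ihom.ev S).app Y := by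
        rw [lift_whiskerLeft_assoc, Category.id_comp]
    _ = 𝟙 Y := by rw [whiskerLeft_curry_snd_comp_ev]; simp

theorem isSplitEpi_ev (s₀ : 𝟙_ C ⟶ S) (Y : C) : IsSplitEpi ((ihom.ev S).app Y) :=
  ⟨⟨⟨_, lift_curry_snd_comp_ev s₀ Y⟩⟩⟩

theorem isSplitMono_curry_snd (s₀ : 𝟙_ C ⟶ S) (Y : C) : IsSplitMono (curry (snd S Y)) := by
  refine ⟨⟨⟨lift (toUnit _ ≫ s₀) (𝟙 _) ≫ (ihom.ev S).app Y, ?_⟩⟩⟩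
  rw [comp_lift_assoc, ← Category.assoc, comp_toUnit, Category.comp_id,
    lift_curry_snd_comp_ev]

end MonoidalClosed

end CategoryTheory

/-- In a cartesian closed category `C` with terminal object `1` and an object
`S` with a global element `s₀ : 1 ⟶ S`, fix an object `Y` and consider the `T`-algebra
`K Y = (Y^S, ε_Y^S)`.  Its structure map satisfies
`ε_Y^S ∘ (q_{S×Y^S})^* = (q_Y)^* ∘ ε_Y`, and for any factorization of `ε_Y^S ∘ (q_{S×Y^S})^*`
as a regular epi `e : S × Y^S ⟶ Y'` followed by a mono `m : Y' ⟶ Y^S`, there is a unique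
isomorphism `ξ : Y ≅ Y'` with `ξ ∘ ε_Y = e` and `m ∘ ξ = (q_Y)^*`. -/
theorem stmt15 {C : Type u} [Category.{v} C] [CartesianMonoidalCategory C] [MonoidalClosed C]
    (S : C) (s₀ : 𝟙_ C ⟶ S) (Y : C) :
    (MonoidalClosed.curry (snd S (S ⊗ (S ⟹ Y))) ≫ (ihom S).map ((ihom.ev S).app Y) =
        (ihom.ev S).app Y ≫ MonoidalClosed.curry (snd S Y)) ∧
      ∀ (Y' : C) (e : S ⊗ (S ⟹ Y) ⟶ Y') (m : Y' ⟶ (S ⟹ Y)),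
        Nonempty (RegularEpi e) → Mono m →
        MonoidalClosed.curry (snd S (S ⊗ (S ⟹ Y))) ≫ (ihom S).map ((ihom.ev S).app Y) =
          e ≫ m →
        ∃! ξ : Y ≅ Y',
          (ihom.ev S).app Y ≫ ξ.hom = e ∧ ξ.hom ≫ m = MonoidalClosed.curry (snd S Y) := by
  have hstruct := MonoidalClosed.curry_snd_comp_map S ((ihom.ev S).app Y)
  refine ⟨hstruct, fun Y' e m he _ hfac => ?_⟩
  have : IsRegularEpi e := ⟨he⟩
  have := MonoidalClosed.isSplitEpi_ev s₀ Y
  have := MonoidalClosed.isSplitMono_curry_snd s₀ Y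
  exact existsUnique_iso_of_strongEpi_mono_fac (hstruct.symm.trans hfac)
end
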